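/- arXiv:2011.02936 — 4 statements merged into one kernel-verified Lean document; each statement's English description precedes it below -/
import Mathlib

section
/- Let A_0, …, A_{N-1} be bounded operators on a Hilbert space lying in a set S ⊂ L(H) such that any product of m elements of S is zero, and suppose ‖A_i‖ ≤ K for all i. Let 0 < γ, t > 0, N ≥ m, and 1 − tγ/N > 0. Then ‖∏_{i=0}^{N-1} ((1 − tγ/N) I + (t/N) A_i)‖ ≤ (1 − tγ/N)^{N−m+1} Σ_{j=0}^{m−1} C(N,j) (1 − tγ/N)^{m−1−j} (tK/N)^j. -/
/-!
Expanding the ordered product of the factors `c • 1 + d • Aᵢ` gives, as in the commutative binomial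
theorem, one term `c ^ (N - |s|) * d ^ |s| • ∏ s` for every sublist `s` of `(A₀, …, A_{N-1})`, the
factors of `∏ s` keeping their order. The products over sublists of length at least `m` vanish by
nilpotency, each of the other `N.choose j` products of length `j` has norm at most `K ^ j`, and
`c ^ (N - j) = c ^ (N - m + 1) * c ^ (m - 1 - j)` for `j < m ≤ N`.
-/

theorem List.sum_map_sublists'_length {α M : Type*} [AddCommMonoid M] (f : ℕ → M) (L : List α) :
    (L.sublists'.map fun s => f s.length).sum
      = ∑ j ∈ Finset.range (L.length + 1), L.length.choose j • f j := by
  rw [← ((List.range_bind_sublistsLen_perm L).map _).sum_eq, List.map_flatMap, List.flatMap_def,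
    List.sum_flatten, List.map_map]
  refine congrArg List.sum (List.map_congr_left fun j _ => ?_)
  rw [Function.comp_apply, List.map_congr_left fun s hs => congrArg f (List.length_of_sublistsLen hs),
    List.map_const', List.sum_replicate, List.length_sublistsLen]

theorem List.prod_map_smul_one_add_smul {𝕜 R : Type*} [CommSemiring 𝕜] [Semiring R] [Algebra 𝕜 R]
    (c d : 𝕜) (L : List R) :
    (L.map fun x => c • (1 : R) + d • x).prod
      = (L.sublists'.map fun s => (c ^ (L.length - s.length) * d ^ s.length) • s.prod).sum := by
  induction L with
  | nil => simp
  | cons a l ih =>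
    have hc : ∀ s ∈ l.sublists', c • ((c ^ (l.length - s.length) * d ^ s.length) • s.prod)
        = (c ^ (l.length + 1 - s.length) * d ^ s.length) • s.prod := fun s hs => by
      rw [smul_smul, ← mul_assoc, ← pow_succ',
        Nat.sub_add_comm (List.mem_sublists'.1 hs).length_le]
    have hd : ∀ s : List R, (d • a) * ((c ^ (l.length - s.length) * d ^ s.length) • s.prod)
        = (c ^ (l.length + 1 - (s.length + 1)) * d ^ (s.length + 1)) • (a * s.prod) := fun s => by
      rw [smul_mul_smul_comm, Nat.add_sub_add_right, pow_succ', mul_left_comm]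
    simp only [List.map_cons, List.prod_cons, ih, add_mul, smul_one_mul, ← List.sum_map_mul_left,
      List.sublists'_cons, List.map_append, List.sum_append, List.map_map, Function.comp_def,
      List.length_cons, hd, List.sum_map_add]
    rw [List.map_congr_left hc]

theorem List.prod_eq_zero_of_length_le {M : Type*} [MonoidWithZero M] {S : Set M} {m : ℕ}
    (hS : ∀ l : List M, (∀ x ∈ l, x ∈ S) → l.length = m → l.prod = 0)
    {l : List M} (hl : ∀ x ∈ l, x ∈ S) (hm : m ≤ l.length) : l.prod = 0 := by
  rw [← l.take_append_drop m, List.prod_append,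
    hS _ (fun x hx => hl x (List.mem_of_mem_take hx)) (List.length_take_of_le hm), zero_mul]

-- `‖1‖ ≤ 1` rather than `NormOneClass`: the identity operator of the zero space has norm `0`.
theorem List.norm_prod_le_pow {R : Type*} [SeminormedRing R] (h1 : ‖(1 : R)‖ ≤ 1) {K : ℝ} :
    ∀ {l : List R}, (∀ x ∈ l, ‖x‖ ≤ K) → ‖l.prod‖ ≤ K ^ l.length
  | [], _ => by simpa using h1
  | a :: l, h => by
    have ha := h a List.mem_cons_self
    rw [List.prod_cons, List.length_cons, pow_succ']
    exact (norm_mul_le _ _).trans (mul_le_mul ha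
      (List.norm_prod_le_pow h1 fun x hx => h x (List.mem_cons_of_mem a hx))
      (norm_nonneg _) ((norm_nonneg a).trans ha))

theorem List.norm_prod_map_smul_one_add_smul_le {𝕜 R : Type*} [NormedField 𝕜] [SeminormedRing R]
    [NormedAlgebra 𝕜 R] (h1 : ‖(1 : R)‖ ≤ 1) (c d : 𝕜) {K : ℝ} {m : ℕ} {L : List R}
    (hK : ∀ x ∈ L, ‖x‖ ≤ K) (hL : ∀ s : List R, s.Sublist L → m ≤ s.length → s.prod = 0) :
    ‖(L.map fun x => c • (1 : R) + d • x).prod‖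
      ≤ ∑ j ∈ Finset.range m, (L.length.choose j : ℝ) * ‖c‖ ^ (L.length - j) * (‖d‖ * K) ^ j := by
  have hterm : ∀ s ∈ L.sublists', ‖(c ^ (L.length - s.length) * d ^ s.length) • s.prod‖
      ≤ if s.length < m then ‖c‖ ^ (L.length - s.length) * (‖d‖ * K) ^ s.length else 0 := by
    intro s hs
    rw [List.mem_sublists'] at hs
    split_ifs with hsm
    · rw [norm_smul, norm_mul, norm_pow, norm_pow, mul_pow, mul_assoc]
      gcongr
      exact List.norm_prod_le_pow h1 fun x hx => hK x (hs.subset hx)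
    · rw [hL s hs (not_lt.1 hsm), smul_zero, norm_zero]
  calc ‖(L.map fun x => c • (1 : R) + d • x).prod‖
      ≤ (L.sublists'.map fun s => ‖(c ^ (L.length - s.length) * d ^ s.length) • s.prod‖).sum := by
        rw [List.prod_map_smul_one_add_smul]
        simpa only [List.map_map, Function.comp_def] using
          List.le_sum_of_subadditive (norm : R → ℝ) norm_zero.le norm_add_le (L.sublists'.map _)
    _ ≤ (L.sublists'.map fun s =>
          if s.length < m then ‖c‖ ^ (L.length - s.length) * (‖d‖ * K) ^ s.length else 0).sum :=
        List.sum_le_sum hterm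
    _ = ∑ j ∈ (Finset.range (L.length + 1)).filter (· < m),
          (L.length.choose j : ℝ) * ‖c‖ ^ (L.length - j) * (‖d‖ * K) ^ j := by
        rw [List.sum_map_sublists'_length
          (fun j => if j < m then ‖c‖ ^ (L.length - j) * (‖d‖ * K) ^ j else 0), Finset.sum_filter]
        simp only [nsmul_eq_mul, mul_ite, mul_zero, mul_assoc]
    _ ≤ _ := by
        refine Finset.sum_le_sum_of_subset_of_nonneg (fun j hj => ?_) fun j hjm hj => le_of_eq ?_
        · exact Finset.mem_range.2 (Finset.mem_filter.1 hj).2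
        · have hnj : L.length < j := by
            simp only [Finset.mem_filter, Finset.mem_range] at hjm hj
            omega
          rw [Nat.choose_eq_zero_of_lt hnj, Nat.cast_zero, zero_mul, zero_mul]

theorem stmt7_general {E : Type*} [NormedAddCommGroup E] [InnerProductSpace ℂ E] [CompleteSpace E]
    (S : Set (E →L[ℂ] E)) (m : ℕ)
    (hS : ∀ l : List (E →L[ℂ] E), (∀ B ∈ l, B ∈ S) → l.length = m → l.prod = 0)
    (N : ℕ) (hN : m ≤ N) (A : Fin N → E →L[ℂ] E) (hA : ∀ i, A i ∈ S)
    (K t γ : ℝ) (hK : ∀ i, ‖A i‖ ≤ K) (ht : 0 < t)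
    (hpos : 0 < 1 - t * γ / N) :
    ‖(List.ofFn fun i : Fin N =>
        ((1 - t * γ / N : ℝ) : ℂ) • (1 : E →L[ℂ] E) + ((t / N : ℝ) : ℂ) • A i).prod‖ ≤
      (1 - t * γ / N) ^ (N - m + 1) *
        ∑ j ∈ Finset.range m,
          (N.choose j : ℝ) * (1 - t * γ / N) ^ (m - 1 - j) * (t * K / N) ^ j := by
  have hK' : ∀ x ∈ List.ofFn A, ‖x‖ ≤ K := by
    simpa only [List.forall_mem_ofFn_iff] using hK
  have hnil : ∀ s : List (E →L[ℂ] E), s.Sublist (List.ofFn A) → m ≤ s.length → s.prod = 0 :=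
    fun s hs => List.prod_eq_zero_of_length_le hS fun x hx =>
      List.forall_mem_ofFn_iff.2 hA x (hs.subset hx)
  have hbound := List.norm_prod_map_smul_one_add_smul_le ContinuousLinearMap.norm_id_le
    ((1 - t * γ / N : ℝ) : ℂ) ((t / N : ℝ) : ℂ) hK' hnil
  rw [List.map_ofFn, List.length_ofFn, Complex.norm_real, Complex.norm_real,
    Real.norm_of_nonneg hpos.le, Real.norm_of_nonneg (by positivity)] at hbound
  refine hbound.trans_eq ?_
  rw [Finset.mul_sum]
  refine Finset.sum_congr rfl fun j hj => ?_
  rw [show N - j = (N - m + 1) + (m - 1 - j) by have := Finset.mem_range.1 hj; omega, pow_add]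
  ring

/-- if $S$ is a set of bounded operators on a Hilbert space such that any
(ordered) product of $m$ elements of $S$ is zero, $A_0,…,A_{N-1} ∈ S$ with $‖A_i‖ ≤ K$,
$t, γ > 0$, $N ≥ m$ and $1 - tγ/N > 0$, then
$‖∏_{i=0}^{N-1}((1-tγ/N)I + (t/N)A_i)‖ ≤
  (1-tγ/N)^{N-m+1} Σ_{j=0}^{m-1} \binom{N}{j}(1-tγ/N)^{m-1-j}(tK/N)^j$. -/
theorem stmt7 {E : Type*} [NormedAddCommGroup E] [InnerProductSpace ℂ E] [CompleteSpace E]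
    (S : Set (E →L[ℂ] E)) (m : ℕ) (hm : 1 ≤ m)
    (hS : ∀ l : List (E →L[ℂ] E), (∀ B ∈ l, B ∈ S) → l.length = m → l.prod = 0)
    (N : ℕ) (hN : m ≤ N) (A : Fin N → E →L[ℂ] E) (hA : ∀ i, A i ∈ S)
    (K t γ : ℝ) (hK : ∀ i, ‖A i‖ ≤ K) (ht : 0 < t) (hγ : 0 < γ)
    (hpos : 0 < 1 - t * γ / N) :
    ‖(List.ofFn fun i : Fin N =>
        ((1 - t * γ / N : ℝ) : ℂ) • (1 : E →L[ℂ] E) + ((t / N : ℝ) : ℂ) • A i).prod‖ ≤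
      (1 - t * γ / N) ^ (N - m + 1) *
        ∑ j ∈ Finset.range m,
          (N.choose j : ℝ) * (1 - t * γ / N) ^ (m - 1 - j) * (t * K / N) ^ j :=
  stmt7_general S m hS N hN A hA K t γ hK ht hpos
end

section
/- Let A_0, …, A_{N-1} ∈ S with ‖A_i‖ ≤ K, where any product of m elements of S vanishes, and let 0 < 1 − tγ/N < 1. Then ‖∏_{i=0}^{N-1} ((1 − tγ/N) I + (t/N) A_i)‖ ≤ (1 − tγ/N)^{N} (1 − tγ/N)^{1−m} p_{m−1}(tK), where p_n(z) = Σ_{j=0}^n z^j/j!. -/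
/-!
Write each factor as `a • (1 + c • Aᵢ)` with `a = 1 - tγ/N` and `c = t/(Na)`. Expanding the
ordered product gives `a ^ N • ∑ₖ c ^ k • eₖ`, where `eₖ` is the sum of the ordered products of
`k` of the `Aᵢ`. Nilpotency kills `eₖ` for `k ≥ m`, while `‖eₖ‖ ≤ (N choose k) Kᵏ ≤ (NK)ᵏ/k!`;
finally `a⁻ᵏ ≤ a^(1-m)` for `k < m` because `a < 1`.
-/

open Finset

namespace List

variable {R : Type*}

section Semiring

variable [Semiring R]

/-- Noncommutative analogue of `Multiset.esymm`: the factors keep their order in `l`. -/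
def ncEsymm (k : ℕ) (l : List R) : R := ((l.sublistsLen k).map prod).sum

@[simp]
theorem ncEsymm_zero (l : List R) : ncEsymm 0 l = 1 := by
  simp [ncEsymm]

@[simp]
theorem ncEsymm_succ_nil (k : ℕ) : ncEsymm (k + 1) ([] : List R) = 0 := by
  simp [ncEsymm]

theorem ncEsymm_succ_cons (k : ℕ) (B : R) (l : List R) :
    ncEsymm (k + 1) (B :: l) = ncEsymm (k + 1) l + B * ncEsymm k l := by
  simp only [ncEsymm, sublistsLen_succ_cons, map_append, sum_append, map_map]
  rw [← sum_map_mul_left]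
  rfl

theorem prod_eq_zero_of_le_length {S : Set R} {m : ℕ}
    (hS : ∀ s : List R, (∀ B ∈ s, B ∈ S) → s.length = m → s.prod = 0)
    {s : List R} (hs : ∀ B ∈ s, B ∈ S) (h : m ≤ s.length) : s.prod = 0 := by
  rw [← take_append_drop m s, prod_append,
    hS _ (fun B hB => hs B (mem_of_mem_take hB)) (length_take_of_le h), zero_mul]

theorem ncEsymm_eq_zero_of_le {S : Set R} {m : ℕ}
    (hS : ∀ s : List R, (∀ B ∈ s, B ∈ S) → s.length = m → s.prod = 0)
    {l : List R} (hl : ∀ B ∈ l, B ∈ S) {k : ℕ} (h : m ≤ k) : ncEsymm k l = 0 := by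
  refine sum_eq_zero fun x hx => ?_
  obtain ⟨s, hs, rfl⟩ := mem_map.1 hx
  obtain ⟨hsub, rfl⟩ := mem_sublistsLen.1 hs
  exact prod_eq_zero_of_le_length hS (fun B hB => hl B (hsub.subset hB)) h

theorem prod_map_smul {𝕜 : Type*} [CommSemiring 𝕜] [Algebra 𝕜 R] (c : 𝕜) (f : R → R)
    (l : List R) : (l.map fun B => c • f B).prod = c ^ l.length • (l.map f).prod := by
  induction l with
  | nil => simp
  | cons B l ih => rw [map_cons, prod_cons, ih, smul_mul_smul_comm, ← pow_succ']; rfl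

theorem prod_map_one_add_smul {𝕜 : Type*} [CommSemiring 𝕜] [Algebra 𝕜 R] (c : 𝕜) (l : List R)
    {M : ℕ} (hM : l.length < M) :
    (l.map fun B => 1 + c • B).prod = ∑ k ∈ Finset.range M, c ^ k • ncEsymm k l := by
  induction l generalizing M with
  | nil =>
    obtain ⟨M, rfl⟩ := Nat.exists_eq_add_one_of_ne_zero hM.ne'
    simp [Finset.sum_range_succ']
  | cons B l ih =>
    obtain ⟨M, rfl⟩ := Nat.exists_eq_add_one_of_ne_zero (Nat.ne_zero_of_lt hM)
    rw [length_cons, Nat.add_lt_add_iff_right] at hM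
    have hshift := ih (Nat.lt_succ_of_lt hM)
    rw [ih hM, Finset.sum_range_succ'] at hshift
    rw [map_cons, prod_cons, ih hM, Finset.sum_range_succ']
    simp only [ncEsymm_succ_cons, ncEsymm_zero, smul_add, Finset.sum_add_distrib]
    rw [add_mul, one_mul, Finset.mul_sum]
    nth_rw 1 [hshift]
    simp only [ncEsymm_zero, smul_mul_assoc, mul_smul_comm, smul_smul, ← pow_succ]
    abel

end Semiring

section Normed

variable [NormedRing R]

theorem norm_ncEsymm_le (h1 : ‖(1 : R)‖ ≤ 1) {K : ℝ} {l : List R} (hK : ∀ B ∈ l, ‖B‖ ≤ K)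
    (k : ℕ) : ‖ncEsymm k l‖ ≤ l.length.choose k * K ^ k := by
  induction l generalizing k with
  | nil => cases k <;> simp [h1]
  | cons B l ih =>
    cases k with
    | zero => simpa using h1
    | succ k =>
      have hB := hK B mem_cons_self
      have ih' := fun k => ih (fun B' hB' => hK B' (mem_cons_of_mem B hB')) k
      rw [ncEsymm_succ_cons, length_cons, Nat.choose_succ_succ']
      calc ‖ncEsymm (k + 1) l + B * ncEsymm k l‖
          ≤ ‖ncEsymm (k + 1) l‖ + ‖B‖ * ‖ncEsymm k l‖ :=
            (norm_add_le _ _).trans (add_le_add_right (norm_mul_le _ _) _)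
        _ ≤ l.length.choose (k + 1) * K ^ (k + 1) + K * (l.length.choose k * K ^ k) :=
            add_le_add (ih' _) (mul_le_mul hB (ih' k) (norm_nonneg _) ((norm_nonneg _).trans hB))
        _ = _ := by push_cast; ring

theorem norm_prod_map_one_add_smul_le {𝕜 : Type*} [NormedField 𝕜] [NormedAlgebra 𝕜 R]
    (h1 : ‖(1 : R)‖ ≤ 1) {S : Set R} {m : ℕ}
    (hS : ∀ s : List R, (∀ B ∈ s, B ∈ S) → s.length = m → s.prod = 0)
    {l : List R} (hl : ∀ B ∈ l, B ∈ S) {K : ℝ} (hK : ∀ B ∈ l, ‖B‖ ≤ K) (c : 𝕜) :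
    ‖(l.map fun B => 1 + c • B).prod‖ ≤
      ∑ k ∈ Finset.range m, ‖c‖ ^ k * (l.length.choose k * K ^ k) := by
  rw [prod_map_one_add_smul c l (M := max m (l.length + 1)) (by omega),
    eventually_constant_sum (fun k hk => by rw [ncEsymm_eq_zero_of_le hS hl hk, smul_zero])
      (le_max_left _ _)]
  refine (norm_sum_le _ _).trans (sum_le_sum fun k _ => ?_)
  grw [norm_smul_le, norm_pow, norm_ncEsymm_le h1 hK]

end Normed

end List

open Nat in
theorem sum_pow_mul_choose_mul_pow_le {a x K : ℝ} (ha0 : 0 < a) (ha1 : a ≤ 1) (hx : 0 ≤ x)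
    (hK : 0 ≤ K) (N m : ℕ) :
    ∑ k ∈ Finset.range m, (x / a) ^ k * (N.choose k * K ^ k) ≤
      a ^ ((1 : ℤ) - m) * ∑ k ∈ Finset.range m, (x * N * K) ^ k / k ! := by
  rw [Finset.mul_sum]
  refine Finset.sum_le_sum fun k hk => ?_
  have hpow : (a ^ k)⁻¹ ≤ a ^ ((1 : ℤ) - m) := by
    rw [← zpow_natCast, ← zpow_neg]
    exact zpow_le_zpow_right_of_le_one₀ ha0 ha1 (by simp at hk; omega)
  have hchoose : x ^ k * (N.choose k * K ^ k) ≤ (x * N * K) ^ k / k ! := by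
    grw [Nat.choose_le_pow_div k N]
    exact le_of_eq (by ring)
  calc (x / a) ^ k * (N.choose k * K ^ k) = (a ^ k)⁻¹ * (x ^ k * (N.choose k * K ^ k)) := by
        ring
    _ ≤ a ^ ((1 : ℤ) - m) * ((x * N * K) ^ k / k !) := by gcongr

theorem stmt9_general {E : Type*} [NormedAddCommGroup E] [InnerProductSpace ℂ E]
    (S : Set (E →L[ℂ] E)) (m : ℕ)
    (hS : ∀ l : List (E →L[ℂ] E), (∀ B ∈ l, B ∈ S) → l.length = m → l.prod = 0)
    (N : ℕ) (A : Fin N → E →L[ℂ] E) (hA : ∀ i, A i ∈ S)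
    (K t γ : ℝ) (hK : ∀ i, ‖A i‖ ≤ K) (ht : 0 < t)
    (hpos : 0 < 1 - t * γ / N) (hlt : 1 - t * γ / N < 1) :
    ‖(List.ofFn fun i : Fin N =>
        ((1 - t * γ / N : ℝ) : ℂ) • (1 : E →L[ℂ] E) + ((t / N : ℝ) : ℂ) • A i).prod‖ ≤
      (1 - t * γ / N) ^ (N : ℤ) * (1 - t * γ / N) ^ ((1 : ℤ) - (m : ℤ)) *
        ∑ j ∈ Finset.range m, (t * K) ^ j / (j.factorial : ℝ) := by
  set a := 1 - t * γ / N
  set c : ℝ := t / N / a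
  have hN0 : N ≠ 0 := by rintro rfl; simp [a] at hlt
  have hK0 : 0 ≤ K := (norm_nonneg _).trans (hK ⟨0, Nat.pos_of_ne_zero hN0⟩)
  have hfactor : ∀ B : E →L[ℂ] E,
      (a : ℂ) • 1 + ((t / N : ℝ) : ℂ) • B = (a : ℂ) • (1 + (c : ℂ) • B) := by
    intro B
    rw [smul_add, smul_smul, ← Complex.ofReal_mul, mul_div_cancel₀ _ hpos.ne']
  simp_rw [hfactor]
  rw [List.ofFn_comp' A fun B => (a : ℂ) • (1 + (c : ℂ) • B), List.prod_map_smul,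
    List.length_ofFn, norm_smul, norm_pow, Complex.norm_real, Real.norm_of_nonneg hpos.le,
    zpow_natCast, mul_assoc]
  have hbound := List.norm_prod_map_one_add_smul_le ContinuousLinearMap.norm_id_le hS
    (List.forall_mem_ofFn_iff.2 hA) (List.forall_mem_ofFn_iff.2 hK) (c : ℂ)
  have hexp := sum_pow_mul_choose_mul_pow_le hpos hlt.le (by positivity : 0 ≤ t / N) hK0 N m
  rw [Complex.norm_real, Real.norm_of_nonneg (by positivity), List.length_ofFn] at hbound
  rw [div_mul_cancel₀ t (Nat.cast_ne_zero.2 hN0)] at hexp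
  gcongr
  exact hbound.trans hexp

/-- under the hypotheses of the previous bound and $0 < 1 - tγ/N < 1$,
$‖∏_{i=0}^{N-1}((1-tγ/N)I + (t/N)A_i)‖ ≤ (1-tγ/N)^N (1-tγ/N)^{1-m} p_{m-1}(tK)$,
where $p_n(z) = Σ_{j=0}^n z^j/j!$. -/
theorem stmt9 {E : Type*} [NormedAddCommGroup E] [InnerProductSpace ℂ E] [CompleteSpace E]
    (S : Set (E →L[ℂ] E)) (m : ℕ) (hm : 1 ≤ m)
    (hS : ∀ l : List (E →L[ℂ] E), (∀ B ∈ l, B ∈ S) → l.length = m → l.prod = 0)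
    (N : ℕ) (hN : m ≤ N) (A : Fin N → E →L[ℂ] E) (hA : ∀ i, A i ∈ S)
    (K t γ : ℝ) (hK : ∀ i, ‖A i‖ ≤ K) (ht : 0 < t) (hγ : 0 < γ)
    (hpos : 0 < 1 - t * γ / N) (hlt : 1 - t * γ / N < 1) :
    ‖(List.ofFn fun i : Fin N =>
        ((1 - t * γ / N : ℝ) : ℂ) • (1 : E →L[ℂ] E) + ((t / N : ℝ) : ℂ) • A i).prod‖ ≤
      (1 - t * γ / N) ^ (N : ℤ) * (1 - t * γ / N) ^ ((1 : ℤ) - (m : ℤ)) *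
        ∑ j ∈ Finset.range m, (t * K) ^ j / (j.factorial : ℝ) :=
  stmt9_general S m hS N A hA K t γ hK ht hpos hlt
end

section
/- With L̃ defined from the Kakutani operators as above, for every k ≥ 3 and every s with r_{k+2} ≤ s ≤ r_{k−1}, the operator W_ε − L̃(s) belongs to Ω_k; consequently, if r_{k+1} ≤ s ≤ r_k then W_ε − L̃(s) ∈ Ω_{k+1} ∩ Ω_k ∩ Ω_{k−1}. -/
open scoped BigOperators ENNReal
noncomputable section

/-- The Hilbert space ℓ². -/
abbrev H : Type := lp (fun _ : ℕ => ℂ) 2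

/-- The canonical Hilbert basis of ℓ² (indexed by ℕ; positions `n ≥ 1` are used). -/
noncomputable def e (n : ℕ) : H := lp.single 2 n 1

/-- `W` is the weighted shift with weight sequence `α`: `W e_n = α_n e_{n+1}`. -/
def IsWeightedShift (W : H →L[ℂ] H) (α : ℕ → ℂ) : Prop :=
  ∀ n : ℕ, 1 ≤ n → W (e n) = α n • e (n + 1)

/-- `Ω_k`: the weighted shifts whose weight vanishes at every position
`n = 2^(k-1)(2j+1)`, i.e. with 2-adic valuation `κ(n) = k - 1`. -/
def Omega (k : ℕ) : Set (H →L[ℂ] H) :=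
  {W | ∃ α : ℕ → ℂ, IsWeightedShift W α ∧
    ∀ n : ℕ, 1 ≤ n → padicValNat 2 n = k - 1 → α n = 0}

/-- The Kakutani weight `α_n = ε_{1+κ(n)}` with `ε_m = 1/K^(m-2) = K^(2-m)` and
`κ(n)` the 2-adic valuation of `n`. -/
noncomputable def kakutaniWeight (K : ℝ) (n : ℕ) : ℝ :=
  K ^ ((2 : ℤ) - (1 + padicValNat 2 n : ℤ))
/-- with $L̃(s) = Σ_{k≥2} ψ_k(s)L_k$ built from the Kakutani corrections
$L_k$ (acting on $e_n$ by removing the fraction $ψ_{κ(n)+1}(s)$ of the weight at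
positions with valuation $κ(n) = k-1$), where each cut-off $ψ_k$ equals 1 on
$[r_{k+2}, r_{k-1}]$: for every $k ≥ 3$ and $s ∈ [r_{k+2}, r_{k-1}]$ one has
$W_ε - L̃(s) ∈ Ω_k$; consequently for $r_{k+1} ≤ s ≤ r_k$,
$W_ε - L̃(s) ∈ Ω_{k+1} ∩ Ω_k ∩ Ω_{k-1}$. -/
theorem stmt17 (K₀ : ℝ) (hK₀ : 1 < K₀) (r : ℕ → ℝ) (hrpos : ∀ j, 0 < r j)
    (hranti : StrictAnti r) (hr2 : ∀ j, r (j + 1) ≤ r j / 2)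
    (Wε : H →L[ℂ] H)
    (hW : ∀ n : ℕ, 1 ≤ n → Wε (e n) = ((kakutaniWeight K₀ n : ℝ) : ℂ) • e (n + 1))
    (ψ : ℕ → ℝ → ℝ) (hψ01 : ∀ k s, 0 ≤ ψ k s ∧ ψ k s ≤ 1)
    (hψone : ∀ k, 3 ≤ k → ∀ s ∈ Set.Icc (r (k + 2)) (r (k - 1)), ψ k s = 1)
    (hψ2 : ∀ s : ℝ, r 4 ≤ s → ψ 2 s = 1)
    (Ltil : ℝ → H →L[ℂ] H)
    (hLtil : ∀ s : ℝ, ∀ n : ℕ, 1 ≤ n →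
      Ltil s (e n) =
        (if 1 ≤ padicValNat 2 n then
          ((ψ (padicValNat 2 n + 1) s * kakutaniWeight K₀ n : ℝ) : ℂ) else 0) • e (n + 1)) :
    (∀ k, 3 ≤ k → ∀ s ∈ Set.Icc (r (k + 2)) (r (k - 1)), Wε - Ltil s ∈ Omega k) ∧
    (∀ k, 3 ≤ k → ∀ s ∈ Set.Icc (r (k + 1)) (r k),
      Wε - Ltil s ∈ Omega (k + 1) ∩ Omega k ∩ Omega (k - 1)) := by
  have key : ∀ (k : ℕ), 2 ≤ k → ∀ s : ℝ, ψ k s = 1 → Wε - Ltil s ∈ Omega k := by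
    intro k hk s hψ
    refine ⟨fun n => ((kakutaniWeight K₀ n : ℝ) : ℂ) -
      (if 1 ≤ padicValNat 2 n then
        ((ψ (padicValNat 2 n + 1) s * kakutaniWeight K₀ n : ℝ) : ℂ) else 0), ?_, ?_⟩
    · intro n hn
      simp only [ContinuousLinearMap.sub_apply, hW n hn, hLtil s n hn, sub_smul]
    · intro n hn hval
      have h1 : 1 ≤ padicValNat 2 n := by omega
      simp only [if_pos h1]
      have hk' : padicValNat 2 n + 1 = k := by omega
      rw [hval] at hk' ⊢
      rw [hk', hψ]
      push_cast
      ring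
  have part1 : ∀ k, 3 ≤ k → ∀ s ∈ Set.Icc (r (k + 2)) (r (k - 1)), Wε - Ltil s ∈ Omega k := by
    intro k hk s hs
    exact key k (by omega) s (hψone k hk s hs)
  refine ⟨part1, ?_⟩
  intro k hk s hs
  obtain ⟨hs1, hs2⟩ := hs
  refine ⟨⟨?_, ?_⟩, ?_⟩
  · refine part1 (k + 1) (by omega) s ⟨?_, ?_⟩
    · exact le_trans (le_of_lt (hranti (by omega : k + 1 < k + 1 + 2))) hs1
    · simpa using le_trans hs2 (le_of_eq rfl)
  · refine part1 k hk s ⟨?_, ?_⟩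
    · exact le_trans (le_of_lt (hranti (by omega : k + 1 < k + 2))) hs1
    · exact le_trans hs2 (le_of_lt (hranti (by omega : k - 1 < k)))
  · rcases Nat.lt_or_ge k 4 with h4 | h4
    · -- k = 3, so k - 1 = 2
      have hk3 : k = 3 := by omega
      subst hk3
      exact key 2 le_rfl s (hψ2 s (by simpa using hs1))
    · refine part1 (k - 1) (by omega) s ⟨?_, ?_⟩
      · have : k - 1 + 2 = k + 1 := by omega
        rw [this]; exact hs1
      · calc s ≤ r k := hs2
          _ ≤ r (k - 1 - 1) := le_of_lt (hranti (by omega))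
end
end

section
/- If the sequence (r_k) satisfies r_k ≤ r_{k−1}/(2 Q_{2^k − 1}) where Q_n = max_{t≥0} p_n(K₀ t) e^{−γ t}, and the solution x(t) of x' = F(x) satisfies r_{k+1} ≤ |x(0)| < r_k for some k ≥ 3, then |x(t)| < r_{k−1} for all t ≥ 0; in particular x = 0 is Lyapunov stable. -/
/-!
Suppose `|x|` reached `r_{k-1}` although `|x(0)| < r_k`. On the stretch between the last visit
to the level `r_k` and the first visit to `r_{k-1}`, the solution stays in the annulus
`r_k ≤ |x| ≤ r_{k-1}`, so the growth bound applies there and gives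
`|x| ≤ Q_{2^k-1} r_k ≤ r_{k-1}/2` at the end of the stretch, a contradiction. Lyapunov stability
follows because `r_k → 0`.
-/

open scoped BigOperators
noncomputable section

open Set Filter Topology

section Crossing

variable {α δ : Type*} [ConditionallyCompleteLinearOrder α] [TopologicalSpace α] [OrderTopology α]
  [DenselyOrdered α] [LinearOrder δ] [TopologicalSpace δ] [OrderClosedTopology δ]
  {f : α → δ} {a t : α} {c : δ}

theorem ContinuousOn.exists_first_eq (hf : ContinuousOn f (Icc a t)) (hat : a ≤ t)
    (hc : c ∈ Icc (f a) (f t)) : ∃ T ∈ Icc a t, f T = c ∧ ∀ u ∈ Icc a T, f u ≤ c := by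
  set S := Icc a t ∩ f ⁻¹' {c}
  have hbdd : BddBelow S := ⟨a, fun u hu => hu.1.1⟩
  obtain ⟨u₀, hu₀, hfu₀⟩ := intermediate_value_Icc hat hf hc
  have hT : sInf S ∈ S :=
    (hf.preimage_isClosed_of_isClosed isClosed_Icc isClosed_singleton).csInf_mem ⟨u₀, hu₀, hfu₀⟩
      hbdd
  refine ⟨sInf S, hT.1, hT.2, fun u hu => le_of_not_gt fun hcu => hcu.ne' ?_⟩
  have hut : u ≤ t := hu.2.trans hT.1.2
  obtain ⟨v, hv, hfv⟩ :=
    intermediate_value_Icc hu.1 (hf.mono (Icc_subset_Icc_right hut)) ⟨hc.1, hcu.le⟩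
  have hTv : sInf S ≤ v := csInf_le hbdd ⟨⟨hv.1, hv.2.trans hut⟩, hfv⟩
  rwa [le_antisymm hv.2 (hu.2.trans hTv)] at hfv

theorem ContinuousOn.exists_last_eq (hf : ContinuousOn f (Icc a t)) (hat : a ≤ t)
    (hc : c ∈ Icc (f a) (f t)) : ∃ s ∈ Icc a t, f s = c ∧ ∀ u ∈ Icc s t, c ≤ f u := by
  set S := Icc a t ∩ f ⁻¹' {c}
  have hbdd : BddAbove S := ⟨t, fun u hu => hu.1.2⟩
  obtain ⟨u₀, hu₀, hfu₀⟩ := intermediate_value_Icc hat hf hc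
  have hs : sSup S ∈ S :=
    (hf.preimage_isClosed_of_isClosed isClosed_Icc isClosed_singleton).csSup_mem ⟨u₀, hu₀, hfu₀⟩
      hbdd
  refine ⟨sSup S, hs.1, hs.2, fun u hu => le_of_not_gt fun hcu => hcu.ne ?_⟩
  have hau : a ≤ u := hs.1.1.trans hu.1
  obtain ⟨v, hv, hfv⟩ :=
    intermediate_value_Icc hu.2 (hf.mono (Icc_subset_Icc_left hau)) ⟨hcu.le, hc.2⟩
  have hvs : v ≤ sSup S := le_csSup hbdd ⟨⟨hau.trans hv.1, hv.2⟩, hfv⟩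
  rwa [le_antisymm (hvs.trans hu.1) hv.1] at hfv

theorem ContinuousOn.forall_lt_of_forall_crossing_lt {b : δ} (hf : ContinuousOn f (Ici a))
    (ha : f a < c) (hcb : c < b)
    (hcross : ∀ s T, a ≤ s → s ≤ T → f s = c → (∀ u ∈ Icc s T, f u ∈ Icc c b) → f T < b) :
    ∀ t, a ≤ t → f t < b := by
  intro t hat
  by_contra! hbt
  obtain ⟨T, hT, hfT, hbelow⟩ :=
    (hf.mono Icc_subset_Ici_self).exists_first_eq hat ⟨(ha.trans hcb).le, hbt⟩
  obtain ⟨s, hs, hfs, habove⟩ := (hf.mono Icc_subset_Ici_self).exists_last_eq hT.1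
    ⟨ha.le, hfT ▸ hcb.le⟩
  exact (hcross s T hs.1 hs.2 hfs fun u hu => ⟨habove u hu, hbelow u ⟨hs.1.trans hu.1, hu.2⟩⟩).ne
    hfT

end Crossing

theorem tendsto_zero_of_le_mul {u : ℕ → ℝ} {c : ℝ} (hc₀ : 0 ≤ c) (hc₁ : c < 1)
    (hu : ∀ k, 0 ≤ u k) (h : ∀ k, u (k + 1) ≤ c * u k) : Tendsto u atTop (𝓝 0) := by
  have hgeom : Tendsto (fun n => c ^ n * u 0) atTop (𝓝 0) := by
    simpa using (tendsto_pow_atTop_nhds_zero_of_lt_one hc₀ hc₁).mul_const (u 0)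
  exact squeeze_zero hu (fun n => le_geom hc₀ n fun k _ => h k) hgeom

theorem one_le_of_isGreatest_truncExp_mul_exp {K γ q : ℝ} {n : ℕ}
    (h : IsGreatest ((fun t : ℝ => (∑ j ∈ Finset.range (n + 1), (K * t) ^ j / (j.factorial : ℝ)) *
      Real.exp (-γ * t)) '' Ici 0) q) : 1 ≤ q := by
  simpa [Finset.sum_range_succ'] using h.2 ⟨0, self_mem_Ici, rfl⟩

theorem stmt19_general (γ K₀ : ℝ)
    (r : ℕ → ℝ) (hrpos : ∀ k, 0 < r k) (hranti : StrictAnti r)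
    (hr2 : ∀ k, r (k + 1) ≤ r k / 2)
    (Q : ℕ → ℝ)
    (hQ : ∀ n : ℕ, IsGreatest
      ((fun t : ℝ =>
        (∑ j ∈ Finset.range (n + 1), (K₀ * t) ^ j / (j.factorial : ℝ)) *
          Real.exp (-γ * t)) '' Set.Ici 0) (Q n))
    (hr : ∀ k : ℕ, 2 ≤ k → r k ≤ r (k - 1) / (2 * Q (2 ^ k - 1)))
    (F : H → H)
    (hlem : ∀ x : ℝ → H, (∀ t : ℝ, HasDerivAt x (F (x t)) t) →
      ∀ k : ℕ, 3 ≤ k → ∀ s₀ s₁ : ℝ, 0 ≤ s₀ → s₀ ≤ s₁ →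
        (∀ t ∈ Set.Icc s₀ s₁, r (k + 2) ≤ ‖x t‖ ∧ ‖x t‖ ≤ r (k - 1)) →
        ∀ t ∈ Set.Icc s₀ s₁,
          ‖x t‖ ≤ (∑ j ∈ Finset.range (2 ^ k), (K₀ * (t - s₀)) ^ j / (j.factorial : ℝ)) *
            Real.exp (-γ * (t - s₀)) * ‖x s₀‖) :
    (∀ x : ℝ → H, (∀ t : ℝ, HasDerivAt x (F (x t)) t) →
      ∀ k : ℕ, 3 ≤ k → r (k + 1) ≤ ‖x 0‖ → ‖x 0‖ < r k →
        ∀ t : ℝ, 0 ≤ t → ‖x t‖ < r (k - 1)) ∧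
    (∀ ε : ℝ, 0 < ε → ∃ δ : ℝ, 0 < δ ∧
      ∀ x : ℝ → H, (∀ t : ℝ, HasDerivAt x (F (x t)) t) → ‖x 0‖ < δ →
        ∀ t : ℝ, 0 ≤ t → ‖x t‖ < ε) := by
  have confined : ∀ x : ℝ → H, (∀ t, HasDerivAt x (F (x t)) t) →
      ∀ k, 3 ≤ k → ‖x 0‖ < r k → ∀ t, 0 ≤ t → ‖x t‖ < r (k - 1) := by
    intro x hx k hk h0
    have hcont : Continuous fun t => ‖x t‖ :=
      (continuous_iff_continuousAt.2 fun t => (hx t).continuousAt).norm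
    refine hcont.continuousOn.forall_lt_of_forall_crossing_lt h0 (hranti (by omega))
      fun s T hs hsT hxs hband => ?_
    have hgrowth := hlem x hx k hk s T hs hsT
      (fun u hu => ⟨(hranti.antitone (by omega)).trans (hband u hu).1, (hband u hu).2⟩)
      T ⟨hsT, le_rfl⟩
    have hQk := (hQ (2 ^ k - 1)).2 ⟨T - s, sub_nonneg.2 hsT, rfl⟩
    rw [Nat.sub_add_cancel Nat.one_le_two_pow] at hQk
    have hrk := hr k (by omega)
    rw [le_div_iff₀ (by linarith [one_le_of_isGreatest_truncExp_mul_exp (hQ (2 ^ k - 1))])] at hrk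
    calc ‖x T‖ ≤ Q (2 ^ k - 1) * r k := by
          rw [← hxs]; exact hgrowth.trans (mul_le_mul_of_nonneg_right hQk (norm_nonneg _))
      _ < r (k - 1) := by linarith [hrpos (k - 1)]
  refine ⟨fun x hx k hk _ h0 => confined x hx k hk h0, fun ε hε => ?_⟩
  have hr0 : Tendsto r atTop (𝓝 0) :=
    tendsto_zero_of_le_mul (c := 1 / 2) (by norm_num) (by norm_num) (fun k => (hrpos k).le)
      fun k => (hr2 k).trans_eq (by ring)
  obtain ⟨N, hN⟩ := (hr0.eventually (gt_mem_nhds hε)).exists_forall_of_atTop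
  exact ⟨r (N + 3), hrpos _, fun x hx h0 t ht =>
    (confined x hx (N + 3) (by omega) h0 t ht).trans (hN _ (by omega))⟩

/-- if the sequence $(r_k)$ satisfies $r_k ≤ r_{k-1}/(2Q_{2^k-1})$, where
$Q_n = \max_{t≥0} p_n(K₀t)e^{-γt}$, and (key lemma, supplied as a hypothesis) whenever
$r_{k+2} ≤ |x(t)| ≤ r_{k-1}$ on an interval $[s₀,s₁]$ one has
$|x(t)| ≤ p_{2^k-1}(K₀(t-s₀))e^{-γ(t-s₀)}|x(s₀)|$ there, then any solution of
$x' = F(x)$ with $r_{k+1} ≤ |x(0)| < r_k$ ($k ≥ 3$) satisfies $|x(t)| < r_{k-1}$ for all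
$t ≥ 0$; in particular $x = 0$ is Lyapunov stable. -/
theorem stmt19 (γ K₀ : ℝ) (hγ : 0 < γ) (hK₀ : 0 < K₀)
    (r : ℕ → ℝ) (hrpos : ∀ k, 0 < r k) (hranti : StrictAnti r)
    (hr2 : ∀ k, r (k + 1) ≤ r k / 2)
    (Q : ℕ → ℝ)
    (hQ : ∀ n : ℕ, IsGreatest
      ((fun t : ℝ =>
        (∑ j ∈ Finset.range (n + 1), (K₀ * t) ^ j / (j.factorial : ℝ)) *
          Real.exp (-γ * t)) '' Set.Ici 0) (Q n))
    (hr : ∀ k : ℕ, 2 ≤ k → r k ≤ r (k - 1) / (2 * Q (2 ^ k - 1)))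
    (F : H → H)
    (hlem : ∀ x : ℝ → H, (∀ t : ℝ, HasDerivAt x (F (x t)) t) →
      ∀ k : ℕ, 3 ≤ k → ∀ s₀ s₁ : ℝ, 0 ≤ s₀ → s₀ ≤ s₁ →
        (∀ t ∈ Set.Icc s₀ s₁, r (k + 2) ≤ ‖x t‖ ∧ ‖x t‖ ≤ r (k - 1)) →
        ∀ t ∈ Set.Icc s₀ s₁,
          ‖x t‖ ≤ (∑ j ∈ Finset.range (2 ^ k), (K₀ * (t - s₀)) ^ j / (j.factorial : ℝ)) *
            Real.exp (-γ * (t - s₀)) * ‖x s₀‖) :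
    (∀ x : ℝ → H, (∀ t : ℝ, HasDerivAt x (F (x t)) t) →
      ∀ k : ℕ, 3 ≤ k → r (k + 1) ≤ ‖x 0‖ → ‖x 0‖ < r k →
        ∀ t : ℝ, 0 ≤ t → ‖x t‖ < r (k - 1)) ∧
    (∀ ε : ℝ, 0 < ε → ∃ δ : ℝ, 0 < δ ∧
      ∀ x : ℝ → H, (∀ t : ℝ, HasDerivAt x (F (x t)) t) → ‖x 0‖ < δ →
        ∀ t : ℝ, 0 ≤ t → ‖x t‖ < ε) :=
  stmt19_general γ K₀ r hrpos hranti hr2 Q hQ hr F hlem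
end
end
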